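/- Let M ≥ 4 and N ≥ 2 be integers, ε = 1/(N²·M²) and δ = ε². Consider the instance over colors {white, red, blue} consisting of N phases, where each phase is M white items (the first of size δ and the remaining M−1 of size ε) followed by 2M items of size δ with alternating colors red, blue, red, blue, … (M red and M blue per phase). Then OPT = M for this instance, while Worst Fit uses NM − N + 1 bins. Consequently, Worst Fit has unbounded asymptotic competitive ratio for colorful bin packing with three colors. -/

import Mathlib

/-- The three colors used in the construction. -/
inductive Color3 : Type
  | white
  | red
  | blue
deriving DecidableEq

/-- The size of the `t`-th item (1-based) of the sequence `σ` of (size, color) pairs. -/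
def itemSize (σ : List (ℝ × Color3)) (t : ℕ) : ℝ := (σ.getD (t - 1) (0, Color3.white)).1

/-- The color of the `t`-th item (1-based) of the sequence `σ`. -/
def itemColor (σ : List (ℝ × Color3)) (t : ℕ) : Color3 := (σ.getD (t - 1) (0, Color3.white)).2

/-- `f` (mapping item indices `1,…,σ.length` to bin indices) is a valid packing of `σ`:
each bin's total size is at most `1` and two items packed consecutively into the same bin
have different colors. -/
def ValidAssign (σ : List (ℝ × Color3)) (f : ℕ → ℕ) : Prop :=
  (∀ b, (∑ t ∈ (Finset.Icc 1 σ.length).filter fun t => f t = b, itemSize σ t) ≤ 1) ∧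
  (∀ i j, 1 ≤ i → i < j → j ≤ σ.length → f i = f j →
    (∀ l, i < l → l < j → f l ≠ f i) → itemColor σ i ≠ itemColor σ j)

/-- `OPTlist σ` is the minimum number of bins over all packings of `σ`. -/
noncomputable def OPTlist (σ : List (ℝ × Color3)) : ℕ :=
  sInf {L | ∃ f : ℕ → ℕ, (∀ t, 1 ≤ t → t ≤ σ.length → 1 ≤ f t ∧ f t ≤ L) ∧ ValidAssign σ f}

/-- One step of Worst Fit: the current bins are listed as (load, color-of-last-item) pairs;
among the bins where the item fits and whose last item has a different color, the new item
goes into one with the largest remaining empty space (i.e. smallest load), and a new bin is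
opened if there is no feasible bin. -/
noncomputable def wfStep (bins : List (ℝ × Color3)) (item : ℝ × Color3) :
    List (ℝ × Color3) :=
  match ((List.range bins.length).filter fun i =>
      decide ((bins.getD i (2, item.2)).1 + item.1 ≤ 1 ∧
        (bins.getD i (2, item.2)).2 ≠ item.2)).argmin
      (fun i => (bins.getD i (2, item.2)).1) with
  | some i => bins.set i ((bins.getD i (2, item.2)).1 + item.1, item.2)
  | none => bins ++ [item]

/-- The bins produced by Worst Fit on the input sequence `σ`. -/
noncomputable def wfRun (σ : List (ℝ × Color3)) : List (ℝ × Color3) :=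
  σ.foldl wfStep []

/-- The instance of Proposition 1 for Worst Fit: `N` phases, each consisting of one white item
of size `δ`, then `M − 1` white items of size `ε`, then `2M` items of size `δ` of alternating
colors red, blue, red, blue, … -/
def wfInstance (N M : ℕ) (ε δ : ℝ) : List (ℝ × Color3) :=
  (List.replicate N
    ((δ, Color3.white) :: List.replicate (M - 1) (ε, Color3.white) ++
      (List.range (2 * M)).map fun j =>
        (δ, if j % 2 = 0 then Color3.red else Color3.blue))).flatten

/-!
Worst Fit keeps a single light bin whose last item is colored, while every other bin has load `ε`
and a white last item. In each phase the first white item goes into the light bin, the only one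
not topped by white; each of the remaining `M - 1` white items sees only white-topped bins and
opens a new one; the `2M` alternating colored items then all go into the light bin, which is the
least loaded bin and never has their color on top. As long as the light bin stays below `ε`, this
yields `1 + N (M - 1)` bins.

An optimal packing uses `M` bins: in every phase, bin `1` takes the first white item and the last
`M + 1` colored items, and bin `b ≥ 2` takes the `b`-th white item and the `(b - 1)`-st colored
item. Since the first `M` items are white, no packing uses fewer.
-/

theorem wfStep_eq_append {bins : List (ℝ × Color3)} {x : ℝ × Color3}
    (h : ∀ b ∈ bins, b.1 + x.1 ≤ 1 → b.2 = x.2) : wfStep bins x = bins ++ [x] := by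
  unfold wfStep
  rw [List.filter_eq_nil_iff.mpr, List.argmin_nil]
  intro i hi
  rw [List.mem_range] at hi
  rw [List.getD_eq_getElem _ _ hi]
  simpa using h _ (List.getElem_mem hi)

theorem wfStep_cons {L : ℝ} {c : Color3} {R : List (ℝ × Color3)} {x : ℝ × Color3}
    (hfit : L + x.1 ≤ 1) (hc : c ≠ x.2) (hR : ∀ b ∈ R, b.2 = x.2 ∨ L < b.1) :
    wfStep ((L, c) :: R) x = (L + x.1, x.2) :: R := by
  unfold wfStep
  set bins := (L, c) :: R
  set feasible := (List.range bins.length).filter fun i =>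
    decide ((bins.getD i (2, x.2)).1 + x.1 ≤ 1 ∧ (bins.getD i (2, x.2)).2 ≠ x.2)
  have h0 : 0 ∈ feasible := by simp [feasible, bins, hfit, hc]
  obtain ⟨m, hm⟩ : ∃ m, feasible.argmin (fun i => (bins.getD i (2, x.2)).1) = some m :=
    Option.ne_none_iff_exists'.mp (List.argmin_eq_none.not.mpr (List.ne_nil_of_mem h0))
  obtain rfl : m = 0 := by
    obtain _ | i := m
    · rfl
    have hle := List.le_of_mem_argmin h0 hm
    have hmem := List.argmin_mem hm
    simp only [feasible, bins, List.mem_filter, List.mem_range, List.length_cons,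
      List.getD_cons_succ, decide_eq_true_eq] at hmem hle
    have hi : i < R.length := by omega
    rw [List.getD_eq_getElem _ _ hi] at hmem hle
    rcases hR _ (List.getElem_mem hi) with h | h
    · exact absurd h hmem.2.2
    · exact absurd hle (not_le.mpr h)
  rw [hm]
  rfl

theorem foldl_wfStep_replicate_of_forall_color_eq {bins : List (ℝ × Color3)} {s : ℝ}
    {c : Color3} (h : ∀ b ∈ bins, b.2 = c) (m : ℕ) :
    (List.replicate m (s, c)).foldl wfStep bins = bins ++ List.replicate m (s, c) := by
  induction m generalizing bins with
  | zero => simp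
  | succ m ih =>
    rw [List.replicate_succ, List.foldl_cons, wfStep_eq_append fun b hb _ => h b hb, ih,
      List.append_assoc, List.singleton_append]
    simpa [or_imp, forall_and] using h

-- The first item fills an empty bin of another color exactly as it would open a new bin; so the
-- first phase may start, like all later ones, from a blue-topped bin.
theorem foldl_wfStep_nil {σ : List (ℝ × Color3)} {x : ℝ × Color3} {c : Color3}
    (hσ : σ.head? = some x) (hx : x.1 ≤ 1) (hc : c ≠ x.2) :
    σ.foldl wfStep [] = σ.foldl wfStep [(0, c)] := by
  obtain _ | ⟨y, l⟩ := σ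
  · simp at hσ
  obtain rfl : y = x := by simpa using hσ
  rw [List.foldl_cons, List.foldl_cons, wfStep_eq_append (by simp),
    wfStep_cons (by simpa) hc (by simp), zero_add]
  rfl

def altColor (j : ℕ) : Color3 := if j % 2 = 0 then Color3.red else Color3.blue

theorem altColor_ne_white (j : ℕ) : altColor j ≠ Color3.white := by
  unfold altColor; split <;> simp

theorem altColor_eq_altColor_iff {i j : ℕ} : altColor i = altColor j ↔ i % 2 = j % 2 := by
  unfold altColor; split_ifs <;> simp <;> omega

theorem altColor_succ_ne (j : ℕ) : altColor j ≠ altColor (j + 1) := by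
  rw [Ne, altColor_eq_altColor_iff]; omega

def wfPhase (M : ℕ) (ε δ : ℝ) : List (ℝ × Color3) :=
  (δ, Color3.white) :: List.replicate (M - 1) (ε, Color3.white) ++
    (List.range (2 * M)).map fun j => (δ, altColor j)

theorem wfInstance_eq_flatten (N M : ℕ) (ε δ : ℝ) :
    wfInstance N M ε δ = (List.replicate N (wfPhase M ε δ)).flatten := rfl

section Simulation

variable {ε δ : ℝ}

theorem foldl_wfStep_alternating (hδ : 0 < δ) (hε : ε ≤ 1) {L : ℝ} {c : Color3}
    {R : List (ℝ × Color3)} (hR : ∀ b ∈ R, ε ≤ b.1) (hc : c ≠ Color3.red) (n : ℕ)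
    (hL : L + (n + 1) * δ ≤ ε) :
    ((List.range (n + 1)).map fun j => (δ, altColor j)).foldl wfStep ((L, c) :: R) =
      (L + (n + 1) * δ, altColor n) :: R := by
  induction n with
  | zero =>
    norm_num at hL
    simp only [zero_add, List.range_one, List.map_cons, List.map_nil, List.foldl_cons,
      List.foldl_nil]
    rw [wfStep_cons (by dsimp only; linarith) hc fun b hb => Or.inr (by linarith [hR b hb])]
    norm_num
  | succ n ih =>
    have hL' : L + (n + 1) * δ ≤ ε := by push_cast at hL; linarith
    rw [List.range_succ, List.map_append, List.foldl_append, ih hL']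
    simp only [List.map_cons, List.map_nil, List.foldl_cons, List.foldl_nil]
    rw [wfStep_cons (by push_cast at hL; linarith) (altColor_succ_ne n)
      fun b hb => Or.inr (by push_cast at hL; linarith [hR b hb])]
    push_cast
    ring_nf

theorem foldl_wfStep_wfPhase (hδ : 0 < δ) (hε : ε ≤ 1) {M : ℕ} (hM : 1 ≤ M) {L : ℝ} {k : ℕ}
    (hL : L + (2 * M + 1) * δ ≤ ε) :
    (wfPhase M ε δ).foldl wfStep ((L, Color3.blue) :: List.replicate k (ε, Color3.white)) =
      (L + (2 * M + 1) * δ, Color3.blue) :: List.replicate (k + (M - 1)) (ε, Color3.white) := by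
  obtain ⟨m, rfl⟩ : ∃ m, M = m + 1 := ⟨M - 1, by omega⟩
  have hwhite : ∀ b ∈ List.replicate k (ε, Color3.white), b.2 = Color3.white ∨ L < b.1 :=
    fun b hb => Or.inl (by rw [List.eq_of_mem_replicate hb])
  rw [wfPhase, List.cons_append, List.foldl_cons, wfStep_cons (by push_cast at hL; nlinarith)
    (by simp) hwhite, List.foldl_append]
  rw [foldl_wfStep_replicate_of_forall_color_eq (by simp), Nat.add_sub_cancel,
    List.cons_append, ← List.replicate_add, show 2 * (m + 1) = 2 * m + 1 + 1 by ring,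
    foldl_wfStep_alternating hδ hε (by simp) (by simp) (2 * m + 1)
      (by push_cast at hL ⊢; linarith)]
  have hblue : altColor (2 * m + 1) = Color3.blue := by simp [altColor, Nat.add_mod]
  rw [hblue]
  push_cast
  ring_nf

theorem foldl_wfStep_phases (hδ : 0 < δ) (hε : ε ≤ 1) {M : ℕ} (hM : 1 ≤ M) (n : ℕ) {L : ℝ}
    {k : ℕ} (hL : L + n * (2 * M + 1) * δ ≤ ε) :
    (List.replicate n (wfPhase M ε δ)).flatten.foldl wfStep
        ((L, Color3.blue) :: List.replicate k (ε, Color3.white)) =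
      (L + n * (2 * M + 1) * δ, Color3.blue) ::
        List.replicate (k + n * (M - 1)) (ε, Color3.white) := by
  induction n generalizing L k with
  | zero => simp
  | succ n ih =>
    have hphase : L + (2 * M + 1) * δ ≤ ε := by
      push_cast at hL; nlinarith [(by positivity : (0 : ℝ) ≤ n * (2 * M + 1) * δ)]
    rw [List.replicate_succ, List.flatten_cons, List.foldl_append,
      foldl_wfStep_wfPhase hδ hε hM hphase, ih (by push_cast at hL ⊢; linarith)]
    congr 2
    · push_cast; ring
    · rw [Nat.succ_mul]; omega

theorem length_wfRun_wfInstance (hδ : 0 < δ) (hε : ε ≤ 1) {N M : ℕ} (hN : 1 ≤ N) (hM : 1 ≤ M)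
    (hNM : N * (2 * M + 1) * δ ≤ ε) :
    (wfRun (wfInstance N M ε δ)).length = N * M - N + 1 := by
  obtain ⟨n, rfl⟩ : ∃ n, N = n + 1 := ⟨N - 1, by omega⟩
  have hrun := foldl_wfStep_phases hδ hε hM (n + 1) (L := 0) (k := 0) (by simpa using hNM)
  have hδε : δ ≤ ε := by
    push_cast at hNM; nlinarith [(by positivity : (0 : ℝ) ≤ n * (2 * M + 1) * δ + 2 * M * δ)]
  rw [wfRun, foldl_wfStep_nil (x := (δ, Color3.white)) rfl (by dsimp only; linarith)
    (c := Color3.blue) (by simp), wfInstance_eq_flatten, ← List.replicate_zero, hrun]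
  simp only [List.length_cons, List.length_replicate, zero_add, Nat.mul_sub_one]

end Simulation

def phaseBin (M q : ℕ) : ℕ :=
  if q = 0 then 1 else if q < M then q + 1 else if q < 2 * M - 1 then q - M + 2 else 1

def phaseColor (M q : ℕ) : Color3 := if q < M then Color3.white else altColor (q - M)

section PhaseBin

variable {M q : ℕ}

theorem exists_gt_phaseBin_eq_of_lt (hq : q < M) :
    ∃ q', q < q' ∧ q' < 3 * M ∧ phaseBin M q' = phaseBin M q :=
  ⟨if q = 0 then 2 * M - 1 else M + q - 1, by unfold phaseBin; split_ifs <;> omega⟩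

theorem exists_lt_phaseBin_eq_of_le (hM : 1 ≤ M) (hq : M ≤ q) :
    ∃ q' < q, phaseBin M q' = phaseBin M q :=
  ⟨if q < 2 * M - 1 then q + 1 - M else 0, by unfold phaseBin; split_ifs <;> omega⟩

theorem exists_phaseBin_eq_between {q' : ℕ} (hlt : q < q') (hq' : q' < 3 * M)
    (hcolor : phaseColor M q = phaseColor M q') (hbin : phaseBin M q = phaseBin M q') :
    ∃ l, q < l ∧ l < q' ∧ phaseBin M l = phaseBin M q := by
  unfold phaseColor at hcolor
  split_ifs at hcolor with h h'
  · unfold phaseBin at hbin; split_ifs at hbin <;> omega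
  · exact absurd hcolor.symm (altColor_ne_white _)
  · exact absurd hcolor (altColor_ne_white _)
  · rw [altColor_eq_altColor_iff] at hcolor
    refine ⟨q + 1, by omega, by omega, ?_⟩
    unfold phaseBin at hbin ⊢; split_ifs at hbin ⊢ <;> omega

end PhaseBin

theorem getD_flatten_replicate {α : Type*} (l : List α) (d : α) {n i : ℕ}
    (hi : i < n * l.length) :
    (List.replicate n l).flatten.getD i d = l.getD (i % l.length) d := by
  induction n generalizing i with
  | zero => simp at hi
  | succ n ih =>
    rw [List.replicate_succ, List.flatten_cons]
    rcases Nat.lt_or_ge i l.length with h | h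
    · rw [List.getD_append _ _ _ _ h, Nat.mod_eq_of_lt h]
    · rw [List.getD_append_right _ _ _ _ h, ih (by rw [Nat.succ_mul] at hi; omega),
        ← Nat.mod_eq_sub_mod h]

theorem getD_sub_one_mem {α : Type*} {l : List α} (d : α) {t : ℕ} (h1 : 1 ≤ t)
    (h2 : t ≤ l.length) : l.getD (t - 1) d ∈ l := by
  rw [List.getD_eq_getElem _ _ (by omega)]
  exact List.getElem_mem _

theorem sum_itemSize_filter_le_one {σ : List (ℝ × Color3)} {e : ℝ}
    (hσ : ∀ x ∈ σ, 0 ≤ x.1 ∧ x.1 ≤ e) (hlen : σ.length * e ≤ 1) (f : ℕ → ℕ) (b : ℕ) :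
    (∑ t ∈ (Finset.Icc 1 σ.length).filter fun t => f t = b, itemSize σ t) ≤ 1 := by
  have hsize : ∀ t ∈ Finset.Icc 1 σ.length, 0 ≤ itemSize σ t ∧ itemSize σ t ≤ e := by
    intro t ht
    rw [Finset.mem_Icc] at ht
    exact hσ _ (getD_sub_one_mem _ ht.1 ht.2)
  calc (∑ t ∈ (Finset.Icc 1 σ.length).filter fun t => f t = b, itemSize σ t)
      ≤ ∑ t ∈ Finset.Icc 1 σ.length, itemSize σ t :=
        Finset.sum_le_sum_of_subset_of_nonneg (Finset.filter_subset _ _)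
          fun t ht _ => (hsize t ht).1
    _ ≤ (Finset.Icc 1 σ.length).card • e :=
        Finset.sum_le_card_nsmul _ _ _ fun t ht => (hsize t ht).2
    _ ≤ 1 := by simpa using hlen

theorem ValidAssign.injOn_of_itemColor_eq {σ : List (ℝ × Color3)} {f : ℕ → ℕ}
    (hf : ValidAssign σ f) {a b : ℕ} {c : Color3} (ha : 1 ≤ a) (hb : b ≤ σ.length)
    (hc : ∀ t ∈ Finset.Icc a b, itemColor σ t = c) : Set.InjOn f (Finset.Icc a b) := by
  have key : ∀ i j, a ≤ i → i < j → j ≤ b → f i ≠ f j := by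
    intro i j hai hij hjb hfij
    -- `l` is the item packed into the bin of `j` just before `j`
    set l := Nat.findGreatest (fun l => i ≤ l ∧ f l = f j) (j - 1)
    have hl : i ≤ l ∧ f l = f j := Nat.findGreatest_spec (P := fun l => i ≤ l ∧ f l = f j)
      (by omega : i ≤ j - 1) ⟨le_rfl, hfij⟩
    have hlj : l < j := by
      have := Nat.findGreatest_le (P := fun l => i ≤ l ∧ f l = f j) (j - 1)
      omega
    refine hf.2 l j (by omega) hlj (by omega) hl.2 (fun l' hll' hl'j hfl' => ?_) ?_
    · exact Nat.findGreatest_is_greatest hll' (by omega) ⟨by omega, hfl'.trans hl.2⟩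
    · rw [hc l (Finset.mem_Icc.mpr ⟨by omega, by omega⟩),
        hc j (Finset.mem_Icc.mpr ⟨by omega, hjb⟩)]
  intro i hi j hj hfij
  simp only [Finset.coe_Icc, Set.mem_Icc] at hi hj
  by_contra hne
  rcases Nat.lt_or_gt_of_ne hne with h | h
  · exact key i j hi.1 h hj.2 hfij
  · exact key j i hj.1 h hi.2 hfij.symm

theorem OPTlist_eq_of_itemColor_eq {σ : List (ℝ × Color3)} {M : ℕ} {f : ℕ → ℕ}
    (hfM : ∀ t, 1 ≤ t → t ≤ σ.length → 1 ≤ f t ∧ f t ≤ M) (hf : ValidAssign σ f)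
    (hM : M ≤ σ.length) {c : Color3} (hc : ∀ t ∈ Finset.Icc 1 M, itemColor σ t = c) :
    OPTlist σ = M := by
  refine le_antisymm (Nat.sInf_le ⟨f, hfM, hf⟩) (le_csInf ⟨M, f, hfM, hf⟩ ?_)
  rintro L ⟨g, hgL, hg⟩
  have hmaps : Set.MapsTo g (Finset.Icc 1 M) (Finset.Icc 1 L) := fun t ht => by
    simp only [Finset.coe_Icc, Set.mem_Icc] at ht ⊢
    exact hgL t ht.1 (ht.2.trans hM)
  simpa using Finset.card_le_card_of_injOn g hmaps (hg.injOn_of_itemColor_eq le_rfl hM hc)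

theorem phaseColor_eq_white_iff {M q : ℕ} : phaseColor M q = Color3.white ↔ q < M := by
  unfold phaseColor
  split_ifs with h
  · simpa using h
  · simpa [h] using altColor_ne_white _

section Instance

variable {N M : ℕ} {ε δ : ℝ}

theorem length_wfPhase (hM : 1 ≤ M) : (wfPhase M ε δ).length = 3 * M := by
  simp only [wfPhase, List.length_append, List.length_cons, List.length_replicate,
    List.length_map, List.length_range]
  omega

theorem length_wfInstance (hM : 1 ≤ M) : (wfInstance N M ε δ).length = N * (3 * M) := by
  simp [wfInstance_eq_flatten, length_wfPhase hM]

theorem getD_wfPhase_snd {q : ℕ} (hq : q < 3 * M) (d : ℝ × Color3) :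
    ((wfPhase M ε δ).getD q d).2 = phaseColor M q := by
  rw [wfPhase, List.cons_append]
  obtain _ | q := q
  · simp [phaseColor, show 0 < M by omega]
  rw [List.getD_cons_succ]
  rcases Nat.lt_or_ge q (M - 1) with h | h
  · rw [List.getD_append _ _ _ _ (by simpa using h), List.getD_replicate _ h,
      phaseColor, if_pos (by omega)]
  · rw [List.getD_append_right _ _ _ _ (by simpa using h), List.length_replicate,
      List.getD_eq_getElem _ _ (by simp; omega), phaseColor, if_neg (by omega)]
    simp only [List.getElem_map, List.getElem_range]
    congr 1
    omega

theorem itemColor_wfInstance {p q : ℕ} (hp : p < N) (hq : q < 3 * M) :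
    itemColor (wfInstance N M ε δ) (3 * M * p + q + 1) = phaseColor M q := by
  have hM : 1 ≤ M := by omega
  have hlt : 3 * M * p + q < N * (wfPhase M ε δ).length := by
    rw [length_wfPhase hM]
    nlinarith
  rw [itemColor, Nat.add_sub_cancel, wfInstance_eq_flatten, getD_flatten_replicate _ _ hlt,
    length_wfPhase hM, Nat.mul_add_mod, Nat.mod_eq_of_lt hq, getD_wfPhase_snd hq]

theorem exists_eq_phase_pos (hM : 1 ≤ M) {t : ℕ} (h1 : 1 ≤ t) (h2 : t ≤ N * (3 * M)) :
    ∃ p q, p < N ∧ q < 3 * M ∧ t = 3 * M * p + q + 1 := by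
  refine ⟨(t - 1) / (3 * M), (t - 1) % (3 * M), ?_, Nat.mod_lt _ (by omega), ?_⟩
  · rw [Nat.div_lt_iff_lt_mul (by omega)]
    omega
  · have := Nat.div_add_mod (t - 1) (3 * M)
    omega

end Instance

def optBin (M t : ℕ) : ℕ := phaseBin M ((t - 1) % (3 * M))

section Packing

variable {N M : ℕ} {ε δ : ℝ}

theorem optBin_three_mul_add {p q : ℕ} (hq : q < 3 * M) :
    optBin M (3 * M * p + q + 1) = phaseBin M q := by
  rw [optBin, Nat.add_sub_cancel, Nat.mul_add_mod, Nat.mod_eq_of_lt hq]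

theorem optBin_mem_Icc (hM : 1 ≤ M) (t : ℕ) : 1 ≤ optBin M t ∧ optBin M t ≤ M := by
  have : (t - 1) % (3 * M) < 3 * M := Nat.mod_lt _ (by omega)
  unfold optBin phaseBin
  split_ifs <;> omega

theorem exists_optBin_eq_between (hM : 1 ≤ M) {i j : ℕ} (hi : 1 ≤ i) (hij : i < j)
    (hj : j ≤ N * (3 * M)) (hbin : optBin M i = optBin M j)
    (hcolor : itemColor (wfInstance N M ε δ) i = itemColor (wfInstance N M ε δ) j) :
    ∃ l, i < l ∧ l < j ∧ optBin M l = optBin M i := by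
  obtain ⟨p, q, hp, hq, rfl⟩ := exists_eq_phase_pos (N := N) hM hi (by omega)
  obtain ⟨p', q', hp', hq', rfl⟩ := exists_eq_phase_pos hM (by omega) hj
  rw [optBin_three_mul_add hq, optBin_three_mul_add hq'] at hbin
  rw [itemColor_wfInstance hp hq, itemColor_wfInstance hp' hq'] at hcolor
  have hblock : ∀ {a b : ℕ}, a < b → 3 * M * a + 3 * M ≤ 3 * M * b := fun h => by
    simpa [Nat.mul_succ] using Nat.mul_le_mul_left (3 * M) h
  rcases lt_trichotomy p p' with hpp | rfl | hpp
  · have := hblock hpp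
    by_cases hw : q < M
    · obtain ⟨l, hql, hl, hbl⟩ := exists_gt_phaseBin_eq_of_lt hw
      exact ⟨3 * M * p + l + 1, by omega, by omega, by
        rw [optBin_three_mul_add hl, hbl, optBin_three_mul_add hq]⟩
    · have hw' : M ≤ q' := by
        rwa [← not_lt, ← phaseColor_eq_white_iff, ← hcolor, phaseColor_eq_white_iff]
      obtain ⟨l, hlq', hbl⟩ := exists_lt_phaseBin_eq_of_le hM hw'
      exact ⟨3 * M * p' + l + 1, by omega, by omega, by
        rw [optBin_three_mul_add (by omega), hbl, optBin_three_mul_add hq, hbin]⟩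
  · obtain ⟨l, hql, hlq', hbl⟩ := exists_phaseBin_eq_between (by omega) hq' hcolor hbin
    exact ⟨3 * M * p + l + 1, by omega, by omega, by
      rw [optBin_three_mul_add (by omega), hbl, optBin_three_mul_add hq]⟩
  · have := hblock hpp
    omega

theorem mem_wfInstance {x : ℝ × Color3} (hx : x ∈ wfInstance N M ε δ) :
    x.1 = δ ∨ x.1 = ε := by
  obtain ⟨_, ⟨_, rfl⟩, hx⟩ := by
    simpa only [wfInstance, List.mem_flatten, List.mem_replicate] using hx
  simp only [List.cons_append, List.mem_cons, List.mem_append, List.mem_map] at hx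
  obtain rfl | hε | ⟨_, _, rfl⟩ := hx
  · exact Or.inl rfl
  · exact Or.inr (by rw [(List.mem_replicate.mp hε).2])
  · exact Or.inl rfl

theorem validAssign_optBin (hM : 1 ≤ M) (hδ : 0 ≤ δ) (hδε : δ ≤ ε)
    (htot : N * (3 * M) * ε ≤ 1) : ValidAssign (wfInstance N M ε δ) (optBin M) := by
  refine ⟨sum_itemSize_filter_le_one (e := ε) (fun x hx => ?_) ?_ _, ?_⟩
  · rcases mem_wfInstance hx with h | h <;> rw [h] <;> constructor <;> linarith
  · rw [length_wfInstance hM]; exact_mod_cast htot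
  · intro i j hi hij hj hbin hbetween hcolor
    obtain ⟨l, hil, hlj, hbl⟩ :=
      exists_optBin_eq_between hM hi hij (by rwa [← length_wfInstance hM]) hbin hcolor
    exact hbetween l hil hlj hbl

theorem OPTlist_wfInstance (hN : 1 ≤ N) (hM : 1 ≤ M) (hδ : 0 ≤ δ) (hδε : δ ≤ ε)
    (htot : N * (3 * M) * ε ≤ 1) : OPTlist (wfInstance N M ε δ) = M := by
  refine OPTlist_eq_of_itemColor_eq (fun t _ _ => optBin_mem_Icc hM t)
    (validAssign_optBin hM hδ hδε htot) (by rw [length_wfInstance hM]; nlinarith)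
    (c := Color3.white) fun t ht => ?_
  rw [Finset.mem_Icc] at ht
  have hcolor := itemColor_wfInstance (N := N) (M := M) (ε := ε) (δ := δ) (p := 0) (q := t - 1)
    (by omega) (by omega)
  rw [mul_zero, zero_add, Nat.sub_add_cancel ht.1] at hcolor
  rw [hcolor, phaseColor_eq_white_iff]
  omega

end Packing

theorem OPTlist_and_length_wfRun_wfInstance {N M : ℕ} (hN : 1 ≤ N) (hM : 1 ≤ M) {ε : ℝ}
    (hε : 0 < ε) (hNM : 3 * N * M * ε ≤ 1) :
    OPTlist (wfInstance N M ε (ε ^ 2)) = M ∧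
      (wfRun (wfInstance N M ε (ε ^ 2))).length = N * M - N + 1 := by
  have hNM1 : (1 : ℝ) ≤ N * M := by norm_cast; nlinarith
  have hε1 : ε ≤ 1 := by nlinarith
  refine ⟨OPTlist_wfInstance hN hM (by positivity) (by nlinarith) (by linarith),
    length_wfRun_wfInstance (by positivity) hε1 hN hM ?_⟩
  have hM1 : (1 : ℝ) ≤ M := by exact_mod_cast hM
  calc N * (2 * M + 1) * ε ^ 2 ≤ 3 * N * M * ε ^ 2 :=
        mul_le_mul_of_nonneg_right (by nlinarith [(N.cast_nonneg : (0 : ℝ) ≤ N)]) (sq_nonneg ε)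
    _ = (3 * N * M * ε) * ε := by ring
    _ ≤ 1 * ε := by gcongr
    _ = ε := one_mul ε

theorem worstFit_on_wfInstance (N M : ℕ) (hN : 2 ≤ N) (hM : 4 ≤ M) :
    OPTlist (wfInstance N M (1 / ((N : ℝ) ^ 2 * (M : ℝ) ^ 2))
        ((1 / ((N : ℝ) ^ 2 * (M : ℝ) ^ 2)) ^ 2)) = M ∧
      (wfRun (wfInstance N M (1 / ((N : ℝ) ^ 2 * (M : ℝ) ^ 2))
        ((1 / ((N : ℝ) ^ 2 * (M : ℝ) ^ 2)) ^ 2))).length = N * M - N + 1 := by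
  have hNM : (8 : ℝ) ≤ N * M := by norm_cast; nlinarith
  refine OPTlist_and_length_wfRun_wfInstance (by omega) (by omega) (by positivity) ?_
  rw [← mul_pow, mul_one_div, div_le_one (by positivity)]
  nlinarith

/-- for `M ≥ 4`, `N ≥ 2`, `ε = 1/(N²M²)` and `δ = ε²`, the above instance has
`OPT = M`, while Worst Fit uses `NM − N + 1` bins.  Consequently Worst Fit has an unbounded
asymptotic competitive ratio: for every `r` and `K` there is an instance with `OPT ≥ K` on
which Worst Fit uses at least `r·OPT` bins. -/
theorem worstFit_unbounded :
    (∀ N M : ℕ, 2 ≤ N → 4 ≤ M →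
      OPTlist (wfInstance N M (1 / ((N : ℝ) ^ 2 * (M : ℝ) ^ 2))
        ((1 / ((N : ℝ) ^ 2 * (M : ℝ) ^ 2)) ^ 2)) = M ∧
      (wfRun (wfInstance N M (1 / ((N : ℝ) ^ 2 * (M : ℝ) ^ 2))
        ((1 / ((N : ℝ) ^ 2 * (M : ℝ) ^ 2)) ^ 2))).length = N * M - N + 1) ∧
    (∀ r : ℝ, ∀ K : ℕ, ∃ σ : List (ℝ × Color3),
      (∀ p ∈ σ, p.1 ∈ Set.Icc (0 : ℝ) 1) ∧
      K ≤ OPTlist σ ∧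
      r * (OPTlist σ : ℝ) ≤ ((wfRun σ).length : ℝ)) := by
  refine ⟨worstFit_on_wfInstance, fun r K => ?_⟩
  set M := max K 4
  set N := 2 * ⌈r⌉₊ + 2
  have hM : (4 : ℝ) ≤ M := by exact_mod_cast le_max_right K 4
  have hN : (N : ℝ) = 2 * ⌈r⌉₊ + 2 := by simp [N]
  obtain ⟨hopt, hlen⟩ := worstFit_on_wfInstance N M (by omega) (le_max_right K 4)
  set ε : ℝ := 1 / ((N : ℝ) ^ 2 * (M : ℝ) ^ 2)
  have hε : 0 ≤ ε ∧ ε ≤ 1 := ⟨by positivity, by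
    rw [div_le_one (by positivity)]
    have hN1 : (1 : ℝ) ≤ N := by rw [hN]; linarith [(Nat.cast_nonneg ⌈r⌉₊ : (0 : ℝ) ≤ ⌈r⌉₊)]
    exact one_le_mul_of_one_le_of_one_le (one_le_pow₀ hN1) (one_le_pow₀ (by linarith))⟩
  refine ⟨wfInstance N M ε (ε ^ 2), fun x hx => ?_, by rw [hopt]; exact le_max_left K 4, ?_⟩
  · rcases mem_wfInstance hx with h | h <;> rw [h] <;> constructor <;> nlinarith
  · have hcast : ((N * M - N + 1 : ℕ) : ℝ) = N * (M - 1) + 1 := by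
      rw [← Nat.mul_sub_one]; push_cast [show 1 ≤ M by omega]; ring
    rw [hopt, hlen, hcast, hN]
    nlinarith [Nat.le_ceil r, (Nat.cast_nonneg ⌈r⌉₊ : (0 : ℝ) ≤ ⌈r⌉₊)]
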